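/- arXiv:2009.08035 — 3 statements merged into one kernel-verified Lean document; each statement's English description precedes it below -/
import Mathlib

section
/- For positive integers m, n, d with m ≤ n−1, and an integer r with d·m ≡ −r (mod n), for every k with 0 ≤ k ≤ m and an indeterminate a, the congruence (a·q^r; q^d)_{m−k} / (q^d/a; q^d)_{m−k} ≡ (−a)^{m−2k} · (a·q^r; q^d)_k / (q^d/a; q^d)_k · q^{m(dm−d+2r)/2 + (d−r)k} holds modulo the n-th cyclotomic polynomial Φ_n(q) (as an identity of rational functions in a and q, where the difference is a rational function whose numerator is divisible by Φ_n(q)). -/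
/-!
Modulo `Φ_n(q)` the variable `q` becomes an `n`-th root of unity, so `q^(dm+r) ≡ 1`. Then
every numerator factor `1 - a q^(r+di)` equals `-a q^(r+di) (1 - q^(d(m-i))/a)`: a monomial times
the denominator factor of index `m-1-i`. Hence the ratios `(aq^r;q^d)_j / (q^d/a;q^d)_j` at `j` and
at `m-j` differ by the monomial `(-a)^(m-2j) q^(e_j)`, which is proved by induction on `j` in any
field where `q^(dm+r) = 1`. That field is the residue field at the prime `Φ_n(q)`: the rational
functions in play have denominators prime to `Φ_n(q)`, so they reduce there, and a rational function
reducing to `0` is `≡ 0 (mod Φ_n)`.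
-/

open Finset

noncomputable section

/-- Polynomial ring in the variables `q, a, b, c` (indices `0,1,2,3`). -/
abbrev R : Type := MvPolynomial (Fin 4) ℚ

/-- Field of rational functions in `q, a, b, c`. -/
abbrev K : Type := FractionRing R

def qv : K := algebraMap R K (MvPolynomial.X 0)
def av : K := algebraMap R K (MvPolynomial.X 1)
def bv : K := algebraMap R K (MvPolynomial.X 2)
def cv : K := algebraMap R K (MvPolynomial.X 3)

/-- The q-shifted factorial `(x; Q)_k = (1-x)(1-xQ)⋯(1-xQ^{k-1})`. -/
def poch (x Q : K) (k : ℕ) : K := ∏ i ∈ Finset.range k, (1 - x * Q ^ i)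

/-- The q-integer `[m] = (1-q^m)/(1-q)` (allowing integer `m`). -/
def qint (m : ℤ) : K := (1 - qv ^ m) / (1 - qv)

/-- The n-th cyclotomic polynomial, as a polynomial in the variable `q`. -/
def Phi (n : ℕ) : R :=
  Polynomial.eval₂ MvPolynomial.C (MvPolynomial.X 0) (Polynomial.cyclotomic n ℚ)

/-- `[n] = 1 + q + ⋯ + q^{n-1}` as a polynomial in `q`. -/
def qintR (n : ℕ) : R := ∑ i ∈ Finset.range n, (MvPolynomial.X 0 : R) ^ i

/-- `x ≡ 0 (mod M)` as rational functions: `x = M·f/g` where `g` shares no prime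
factor with `M` (i.e. the numerator of `x` in lowest terms is divisible by `M`). -/
def modCong (M : R) (x : K) : Prop :=
  ∃ f g : R, g ≠ 0 ∧ (∀ p : R, Prime p → p ∣ M → ¬ p ∣ g) ∧
    x * algebraMap R K g = algebraMap R K (M * f)

/-- `poch` over an arbitrary commutative ring (on `K` the two agree by definition). -/
def qPoch {F : Type*} [CommRing F] (x Q : F) (j : ℕ) : F := ∏ i ∈ range j, (1 - x * Q ^ i)

lemma two_mul_sum_range_add_mul (m : ℕ) (r d : ℤ) :
    2 * ∑ i ∈ range m, (r + d * i) = m * (d * m - d + 2 * r) := by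
  induction m with
  | zero => simp
  | succ m ih => rw [sum_range_succ, mul_add, ih]; push_cast; ring

section Reflection

variable {F : Type*} [Field F]

lemma prod_mul_zpow_eq {q : F} (hq : q ≠ 0) (b : F) (f : ℕ → ℤ) (m : ℕ) :
    ∏ i ∈ range m, b * q ^ f i = b ^ m * q ^ ∑ i ∈ range m, f i := by
  induction m with
  | zero => simp
  | succ m ih => rw [prod_range_succ, sum_range_succ, ih, zpow_add₀ hq]; ring

lemma qPoch_div_qPoch_succ (x y Q : F) (j : ℕ) :
    qPoch x Q (j + 1) / qPoch y Q (j + 1) =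
      qPoch x Q j / qPoch y Q j * ((1 - x * Q ^ j) / (1 - y * Q ^ j)) := by
  rw [qPoch, qPoch, prod_range_succ, prod_range_succ, mul_div_mul_comm]; rfl

/-- The induction behind `qPoch_div_qPoch_reflect`: `A j` stands for the ratio of the two
Pochhammer symbols, whose `j`-th numerator factor is `u j * δ (m - 1 - j)`. -/
lemma eq_mul_of_reflect_step {m : ℕ} {A c u δ : ℕ → F} (hu : ∀ i, u i ≠ 0)
    (hδ : ∀ i < m, δ i ≠ 0) (hstep : ∀ j < m, A (j + 1) = A j * (u j * δ (m - 1 - j) / δ j))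
    (hc : ∀ k < m, c k = c (k + 1) * (u k * u (m - 1 - k))) (h0 : A m = c 0 * A 0) :
    ∀ k ≤ m, A (m - k) = c k * A k := by
  intro k hk
  induction k with
  | zero => exact h0
  | succ k ih =>
    have hkm : k < m := by omega
    have hk' : m - 1 - k < m := by omega
    have h1 := hstep (m - 1 - k) hk'
    rw [show m - 1 - k + 1 = m - k by omega, show m - 1 - (m - 1 - k) = k by omega,
      ih hkm.le, hc k hkm] at h1
    refine mul_right_cancel₀ (div_ne_zero (mul_ne_zero (hu (m - 1 - k)) (hδ k hkm)) (hδ _ hk')) ?_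
    rw [show m - (k + 1) = m - 1 - k by omega, ← h1, hstep k hkm]
    field_simp [hδ k hkm, hδ _ hk']

variable {q a : F} {d m : ℕ} {r : ℤ}

lemma zpow_mul_zpow_natCast_pow (hq : q ≠ 0) (r d : ℤ) (i : ℕ) :
    q ^ r * (q ^ d) ^ i = q ^ (r + d * i) := by
  rw [← zpow_natCast, ← zpow_mul, zpow_add₀ hq]

lemma one_sub_mul_zpow_eq_of_root (hq : q ≠ 0) (ha : a ≠ 0) (hroot : q ^ ((d : ℤ) * m + r) = 1)
    {i : ℕ} (hi : i < m) :
    1 - a * q ^ r * (q ^ (d : ℤ)) ^ i =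
      -a * q ^ (r + d * i) * (1 - q ^ (d : ℤ) / a * (q ^ (d : ℤ)) ^ (m - 1 - i)) := by
  have h : q ^ (r + d * i) * (q ^ (d : ℤ) * (q ^ (d : ℤ)) ^ (m - 1 - i)) = 1 := by
    rw [← pow_succ', ← zpow_natCast, ← zpow_mul, ← zpow_add₀ hq, ← hroot]
    congr 1; push_cast [show m - 1 - i + 1 = m - i by omega, Nat.cast_sub hi.le]; ring
  rw [mul_assoc a, zpow_mul_zpow_natCast_pow hq]
  field_simp
  linear_combination -h

theorem qPoch_div_qPoch_reflect (hq : q ≠ 0) (ha : a ≠ 0) (hroot : q ^ ((d : ℤ) * m + r) = 1)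
    (hden : ∀ i < m, 1 - q ^ (d : ℤ) / a * (q ^ (d : ℤ)) ^ i ≠ 0) {k : ℕ} (hk : k ≤ m) :
    qPoch (a * q ^ r) (q ^ (d : ℤ)) (m - k) / qPoch (q ^ (d : ℤ) / a) (q ^ (d : ℤ)) (m - k) =
      (-a) ^ ((m : ℤ) - 2 * k) *
        (qPoch (a * q ^ r) (q ^ (d : ℤ)) k / qPoch (q ^ (d : ℤ) / a) (q ^ (d : ℤ)) k) *
        q ^ ((m : ℤ) * (d * m - d + 2 * r) / 2 + (d - r) * k) := by
  set e₀ := (m : ℤ) * (d * m - d + 2 * r) / 2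
  rw [mul_right_comm]
  refine eq_mul_of_reflect_step
    (A := fun j => qPoch (a * q ^ r) (q ^ (d : ℤ)) j / qPoch (q ^ (d : ℤ) / a) (q ^ (d : ℤ)) j)
    (c := fun k : ℕ => (-a) ^ ((m : ℤ) - 2 * k) * q ^ (e₀ + (d - r) * k))
    (u := fun i : ℕ => -a * q ^ (r + d * i))
    (fun i => mul_ne_zero (neg_ne_zero.mpr ha) (zpow_ne_zero _ hq)) hden
    (fun j hj => by simp only [qPoch_div_qPoch_succ, one_sub_mul_zpow_eq_of_root hq ha hroot hj])
    (fun k hk => ?_) ?_ k hk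
  · have ha' : -a ≠ 0 := neg_ne_zero.mpr ha
    have hpow : (-a) ^ ((m : ℤ) - 2 * k) = (-a) ^ ((m : ℤ) - 2 * ↑(k + 1)) * (-a) * (-a) := by
      rw [← zpow_add_one₀ ha', ← zpow_add_one₀ ha']; congr 1; push_cast; ring
    have hqpow : q ^ (e₀ + (d - r) * k) =
        q ^ (e₀ + (d - r) * ↑(k + 1)) * q ^ (r + d * k) * q ^ (r + d * ↑(m - 1 - k)) := by
      rw [← zpow_add₀ hq, ← zpow_add₀ hq, ← mul_one (q ^ (e₀ + (d - r) * k)), ← hroot,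
        ← zpow_add₀ hq, show ((m - 1 - k : ℕ) : ℤ) = m - 1 - k by omega]
      congr 1; push_cast; ring
    rw [hpow, hqpow]; ring
  · have hD : qPoch (q ^ (d : ℤ) / a) (q ^ (d : ℤ)) m ≠ 0 :=
      prod_ne_zero_iff.mpr fun i hi => hden i (mem_range.mp hi)
    have hN : qPoch (a * q ^ r) (q ^ (d : ℤ)) m =
        (∏ i ∈ range m, -a * q ^ (r + d * i)) * qPoch (q ^ (d : ℤ) / a) (q ^ (d : ℤ)) m := by
      rw [qPoch, qPoch, ← prod_range_reflect (fun i => 1 - q ^ (d : ℤ) / a * (q ^ (d : ℤ)) ^ i),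
        ← prod_mul_distrib]
      exact prod_congr rfl fun i hi => one_sub_mul_zpow_eq_of_root hq ha hroot (mem_range.mp hi)
    have he₀ : e₀ = ∑ i ∈ range m, (r + d * i) :=
      Int.ediv_eq_of_eq_mul_right two_ne_zero (two_mul_sum_range_add_mul m r d).symm
    rw [hN, mul_div_cancel_right₀ _ hD, prod_mul_zpow_eq hq, ← he₀]
    simp [qPoch]

end Reflection

section Reduction

variable {A : Type*} (L : Type*) [CommRing A] [IsDomain A] [Field L] [Algebra A L]
  [IsFractionRing A L] (P : Ideal A) [P.IsPrime]

/-- `(x, z)` belongs to it iff `x` lies in the localization `A_P ⊆ L` and reduces to `z` in the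
residue field of `P`. -/
def reductionGraph : Subring (L × P.ResidueField) :=
  ((Localization.mapToFractionRing L P.primeCompl (Localization.AtPrime P)
    P.primeCompl_le_nonZeroDivisors).toRingHom.prod (IsLocalRing.residue _)).range

variable {L P}

lemma algebraMap_mem_reductionGraph (a : A) :
    (algebraMap A L a, algebraMap A P.ResidueField a) ∈ reductionGraph L P :=
  ⟨algebraMap A _ a, by
    simp [IsScalarTower.algebraMap_apply A (Localization.AtPrime P) P.ResidueField]⟩

lemma inv_mem_reductionGraph {x : L} {z : P.ResidueField} (h : (x, z) ∈ reductionGraph L P)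
    (hz : z ≠ 0) : (x⁻¹, z⁻¹) ∈ reductionGraph L P := by
  obtain ⟨y, hy⟩ := h
  simp only [RingHom.prod_apply, Prod.mk.injEq] at hy
  obtain ⟨u, rfl⟩ := (IsLocalRing.residue_ne_zero_iff_isUnit y).mp (hy.2 ▸ hz)
  refine ⟨↑u⁻¹, ?_⟩
  simp only [RingHom.prod_apply, Prod.mk.injEq, ← hy.1, ← hy.2]
  exact ⟨map_units_inv _ u, map_units_inv _ u⟩

lemma div_mem_reductionGraph {x x' : L} {z z' : P.ResidueField}
    (h : (x, z) ∈ reductionGraph L P) (h' : (x', z') ∈ reductionGraph L P) (hz' : z' ≠ 0) :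
    (x / x', z / z') ∈ reductionGraph L P := by
  simpa only [div_eq_mul_inv, Prod.mk_mul_mk] using mul_mem h (inv_mem_reductionGraph h' hz')

lemma zpow_mem_reductionGraph {x : L} {z : P.ResidueField} (h : (x, z) ∈ reductionGraph L P)
    (hz : z ≠ 0) (t : ℤ) : (x ^ t, z ^ t) ∈ reductionGraph L P := by
  cases t with
  | ofNat t => simpa only [Int.ofNat_eq_natCast, zpow_natCast, Prod.pow_mk] using pow_mem h t
  | negSucc t =>
    simpa only [zpow_negSucc] using
      inv_mem_reductionGraph (Prod.pow_mk x z (t + 1) ▸ pow_mem h (t + 1)) (pow_ne_zero _ hz)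

lemma qPoch_mem_reductionGraph {x Q : L} {zx zQ : P.ResidueField}
    (hx : (x, zx) ∈ reductionGraph L P) (hQ : (Q, zQ) ∈ reductionGraph L P) (j : ℕ) :
    (qPoch x Q j, qPoch zx zQ j) ∈ reductionGraph L P := by
  convert prod_mem (t := range j) fun i _ => sub_mem (one_mem _) (mul_mem hx (pow_mem hQ i))
    using 1
  ext <;> simp [qPoch, Prod.fst_prod, Prod.snd_prod]

lemma exists_mul_eq_of_mem_reductionGraph {x : L} (h : (x, 0) ∈ reductionGraph L P) :
    ∃ f ∈ P, ∃ g ∉ P, x * algebraMap A L g = algebraMap A L f := by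
  obtain ⟨y, hy⟩ := h
  simp only [RingHom.prod_apply, Prod.mk.injEq] at hy
  obtain ⟨rfl, hy⟩ := hy
  rw [IsLocalRing.residue_eq_zero_iff, ← IsLocalization.AtPrime.map_eq_maximalIdeal P,
    IsLocalization.mem_map_algebraMap_iff P.primeCompl] at hy
  obtain ⟨⟨⟨f, hf⟩, ⟨g, hg⟩⟩, hfg⟩ := hy
  refine ⟨f, hf, g, hg, ?_⟩
  simpa using congrArg (Localization.mapToFractionRing L P.primeCompl (Localization.AtPrime P)
    P.primeCompl_le_nonZeroDivisors) hfg

end Reduction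

lemma modCong_of_mem_reductionGraph {M : R} (hM : Prime M) [(Ideal.span {M}).IsPrime] {x : K}
    (h : (x, 0) ∈ reductionGraph K (Ideal.span {M})) : modCong M x := by
  obtain ⟨f, hf, g, hg, hfg⟩ := exists_mul_eq_of_mem_reductionGraph h
  obtain ⟨f, rfl⟩ := Ideal.mem_span_singleton'.mp hf
  rw [Ideal.mem_span_singleton] at hg
  refine ⟨f, g, fun h0 => hg (h0 ▸ dvd_zero M), fun p hp hpM hpg => hg ?_, by rw [hfg, mul_comm]⟩
  exact (hp.irreducible.dvd_symm hM.irreducible hpM).trans hpg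

section Cyclotomic

open MvPolynomial

lemma prime_aeval_X_zero {π : Polynomial ℚ} (hπ : Prime π) :
    Prime (Polynomial.aeval (X 0 : R) π) := by
  let e : R ≃ₐ[ℚ] MvPolynomial (Fin 3) (Polynomial ℚ) :=
    (renameEquiv ℚ (_root_.finSuccEquiv 3)).trans (optionEquivRight ℚ (Fin 3))
  have he : e (Polynomial.aeval (X 0 : R) π) = C π := by
    rw [← Polynomial.aeval_algHom_apply]
    simp only [e, AlgEquiv.trans_apply, renameEquiv_apply, rename_X, finSuccEquiv_zero,
      optionEquivRight_X_none]
    rw [← algebraMap_eq, Polynomial.aeval_algebraMap_apply, Polynomial.aeval_X_left_apply]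
  rw [← MulEquiv.prime_iff e.toMulEquiv]
  simpa [he] using (prime_C_iff (σ := Fin 3)).mpr hπ

lemma Phi_eq_aeval (n : ℕ) : Phi n = Polynomial.aeval (X 0) (Polynomial.cyclotomic n ℚ) := by
  rw [Phi, Polynomial.aeval_def, algebraMap_eq]

lemma prime_Phi {n : ℕ} (hn : 0 < n) : Prime (Phi n) := by
  rw [Phi_eq_aeval]
  exact prime_aeval_X_zero (Polynomial.cyclotomic.irreducible_rat hn).prime

lemma Phi_dvd_X_zero_pow_sub_one (n : ℕ) : Phi n ∣ X 0 ^ n - 1 := by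
  simpa [Phi_eq_aeval] using map_dvd (Polynomial.aeval (X 0 : R))
    (Polynomial.cyclotomic.dvd_X_pow_sub_one n ℚ)

lemma not_Phi_dvd_of_aeval_eq_one {n : ℕ} (hn : 0 < n) {g : R} (v : Fin 4 → Polynomial ℚ)
    (hv : v 0 = Polynomial.X) (hg : aeval v g = 1) : ¬ Phi n ∣ g := by
  intro h
  have := map_dvd (aeval v) h
  rw [hg, Phi_eq_aeval, ← Polynomial.aeval_algHom_apply, aeval_X, hv,
    Polynomial.aeval_X_left_apply] at this
  exact (Polynomial.cyclotomic.irreducible_rat hn).not_isUnit (isUnit_of_dvd_one this)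

instance isPrime_span_Phi (n : ℕ) [NeZero n] : (Ideal.span {Phi n}).IsPrime :=
  (Ideal.span_singleton_prime (prime_Phi (NeZero.pos n)).ne_zero).mpr (prime_Phi (NeZero.pos n))

variable (n : ℕ) [NeZero n]

lemma algebraMap_X_zero_pow_eq_one :
    algebraMap R (Ideal.span {Phi n}).ResidueField (X 0) ^ n = 1 := by
  rw [← sub_eq_zero, ← map_pow, ← map_one (algebraMap R _), ← map_sub,
    Ideal.algebraMap_residueField_eq_zero, Ideal.mem_span_singleton]
  exact Phi_dvd_X_zero_pow_sub_one n

lemma algebraMap_X_zero_ne_zero : algebraMap R (Ideal.span {Phi n}).ResidueField (X 0) ≠ 0 :=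
  ne_zero_pow (NeZero.ne n) ((algebraMap_X_zero_pow_eq_one n).symm ▸ one_ne_zero)

lemma algebraMap_X_zero_zpow_eq_one {t : ℤ} (ht : (n : ℤ) ∣ t) :
    algebraMap R (Ideal.span {Phi n}).ResidueField (X 0) ^ t = 1 := by
  obtain ⟨c, rfl⟩ := ht
  rw [zpow_mul, zpow_natCast, algebraMap_X_zero_pow_eq_one, one_zpow]

lemma algebraMap_X_one_ne_zero : algebraMap R (Ideal.span {Phi n}).ResidueField (X 1) ≠ 0 := by
  rw [ne_eq, Ideal.algebraMap_residueField_eq_zero, Ideal.mem_span_singleton]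
  exact not_Phi_dvd_of_aeval_eq_one (NeZero.pos n) ![Polynomial.X, 1, 0, 0] rfl (by simp)

lemma algebraMap_X_one_ne_X_zero_pow (s : ℕ) :
    algebraMap R (Ideal.span {Phi n}).ResidueField (X 1) ≠ algebraMap R _ (X 0) ^ s := by
  rw [ne_eq, ← sub_eq_zero, ← map_pow, ← map_sub, Ideal.algebraMap_residueField_eq_zero,
    Ideal.mem_span_singleton]
  exact not_Phi_dvd_of_aeval_eq_one (NeZero.pos n) ![Polynomial.X, Polynomial.X ^ s + 1, 0, 0] rfl
    (by simp)

lemma one_sub_div_mul_pow_ne_zero (d i : ℕ) :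
    1 - algebraMap R (Ideal.span {Phi n}).ResidueField (X 0) ^ (d : ℤ) / algebraMap R _ (X 1) *
      (algebraMap R _ (X 0) ^ (d : ℤ)) ^ i ≠ 0 := by
  rw [div_mul_eq_mul_div, ← pow_succ', zpow_natCast, ← pow_mul, sub_ne_zero, ne_comm, ne_eq,
    div_eq_one_iff_eq (algebraMap_X_one_ne_zero n)]
  exact fun h => algebraMap_X_one_ne_X_zero_pow n _ h.symm

end Cyclotomic

theorem stmt0_general (m n d : ℕ) (hn : 0 < n) (r : ℤ) (hmr : (d * m : ℤ) ≡ -r [ZMOD (n : ℤ)])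
    (k : ℕ) (hk : k ≤ m) :
    modCong (Phi n)
      (poch (av * qv ^ r) (qv ^ (d : ℤ)) (m - k) / poch (qv ^ (d : ℤ) / av) (qv ^ (d : ℤ)) (m - k) -
        (-av) ^ ((m : ℤ) - 2 * k) *
          (poch (av * qv ^ r) (qv ^ (d : ℤ)) k / poch (qv ^ (d : ℤ) / av) (qv ^ (d : ℤ)) k) *
          qv ^ ((m : ℤ) * (d * m - d + 2 * r) / 2 + (d - r) * k)) := by
  have : NeZero n := ⟨hn.ne'⟩
  have hroot := algebraMap_X_zero_zpow_eq_one n (t := d * m + r)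
    (by simpa [sub_neg_eq_add] using hmr.symm.dvd)
  have hζ := algebraMap_X_zero_ne_zero n
  have hα := algebraMap_X_one_ne_zero n
  have hden := one_sub_div_mul_pow_ne_zero n d
  have hq := zpow_mem_reductionGraph (algebraMap_mem_reductionGraph (L := K) (MvPolynomial.X 0)) hζ
  have ha := algebraMap_mem_reductionGraph (L := K) (P := Ideal.span {Phi n}) (MvPolynomial.X 1)
  set ζ := algebraMap R (Ideal.span {Phi n}).ResidueField (MvPolynomial.X 0)
  set α := algebraMap R (Ideal.span {Phi n}).ResidueField (MvPolynomial.X 1)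
  have hratio : ∀ j,
      (poch (av * qv ^ r) (qv ^ (d : ℤ)) j / poch (qv ^ (d : ℤ) / av) (qv ^ (d : ℤ)) j,
      qPoch (α * ζ ^ r) (ζ ^ (d : ℤ)) j / qPoch (ζ ^ (d : ℤ) / α) (ζ ^ (d : ℤ)) j) ∈
      reductionGraph K (Ideal.span {Phi n}) := fun j =>
    div_mem_reductionGraph (qPoch_mem_reductionGraph (mul_mem ha (hq r)) (hq d) j)
      (qPoch_mem_reductionGraph (div_mem_reductionGraph (hq d) ha hα) (hq d) j)
      (prod_ne_zero_iff.mpr fun i _ => hden i)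
  refine modCong_of_mem_reductionGraph (prime_Phi hn) ?_
  rw [← sub_eq_zero.mpr (qPoch_div_qPoch_reflect hζ hα hroot (fun i _ => hden i) hk)]
  exact sub_mem (hratio (m - k)) (mul_mem (mul_mem
    (zpow_mem_reductionGraph (neg_mem ha) (neg_ne_zero.mpr hα) _) (hratio k)) (hq _))

theorem stmt0 (m n d : ℕ) (hm0 : 0 < m) (hn : 0 < n) (hd : 0 < d)
    (hm : m ≤ n - 1) (r : ℤ) (hmr : (d * m : ℤ) ≡ -r [ZMOD (n : ℤ)])
    (k : ℕ) (hk : k ≤ m) :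
    modCong (Phi n)
      (poch (av * qv ^ r) (qv ^ (d : ℤ)) (m - k) / poch (qv ^ (d : ℤ) / av) (qv ^ (d : ℤ)) (m - k) -
        (-av) ^ ((m : ℤ) - 2 * k) *
          (poch (av * qv ^ r) (qv ^ (d : ℤ)) k / poch (qv ^ (d : ℤ) / av) (qv ^ (d : ℤ)) k) *
          qv ^ ((m : ℤ) * (d * m - d + 2 * r) / 2 + (d - r) * k)) :=
  stmt0_general m n d hn r hmr k hk

end
end

section
/- Let n, d be positive integers with gcd(n,d) = 1, let r be a nonzero integer, and let m with 0 ≤ m ≤ n−1 satisfy d·m ≡ −r (mod n). Then for every integer k with m < k ≤ n−1, the q-shifted factorial (q^r; q^d)_k is divisible by the n-th cyclotomic polynomial Φ_n(q) in the polynomial ring ℤ[q], while (q^d; q^d)_k is coprime to Φ_n(q). -/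
noncomputable section

/-- Laurent polynomials over ℤ in the variable `q` (needed since `q^r` may have `r < 0`). -/
abbrev L : Type := LaurentPolynomial ℤ

/-- The q-shifted factorial `(q^x; q^d)_k = ∏_{i<k} (1 - q^{x+di})` as a Laurent polynomial. -/
def lpoch (x d : ℤ) (k : ℕ) : L :=
  ∏ i ∈ Finset.range k, (1 - LaurentPolynomial.T (x + d * i))

/-- The n-th cyclotomic polynomial, viewed as a Laurent polynomial. -/
def lPhi (n : ℕ) : L := (Polynomial.cyclotomic n ℤ).toLaurent

/-!
The factor of `(q^r; q^d)_k` with index `m` is `1 - q^(r + d m)`, and `n ∣ r + d m`; since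
`Φ_n ∣ q^n - 1 ∣ 1 - q^(n e)` for every integer `e`, it is divisible by `Φ_n`.

For the second part, `Φ_n` is prime in `ℤ[X]` and does not divide `X`, so it stays prime in the
localisation `ℤ[q, q⁻¹]`; a prime `p ∣ Φ_n` is then associate to `Φ_n`. If `p` divided
`(q^d; q^d)_k`, then `Φ_n` would divide a factor `1 - q^(d (i + 1))` with `i + 1 ≤ k < n`.
Evaluating at a primitive `n`-th root of unity `ζ` gives `ζ^(d (i + 1)) = 1`, so
`n ∣ d (i + 1)`, and `n ∣ i + 1` by coprimality: impossible.
-/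

open Polynomial LaurentPolynomial

namespace LaurentPolynomial

variable {R : Type*} [CommRing R]

instance [IsDomain R] : IsDomain R[T;T⁻¹] :=
  IsLocalization.Away.isDomain _ (X_ne_zero (R := R))

theorem one_sub_T_dvd_one_sub_T_mul (a e : ℤ) : (1 - T a : R[T;T⁻¹]) ∣ 1 - T (a * e) := by
  induction e using Int.induction_on with
  | zero => simp
  | succ e ih =>
    have h : (1 - T (a * (e + 1)) : R[T;T⁻¹]) = (1 - T a) + T a * (1 - T (a * e)) := by
      rw [mul_sub, ← T_add, mul_add, mul_one, add_comm (a * e)]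
      ring
    rw [h]
    exact dvd_add dvd_rfl (ih.mul_left _)
  | pred e ih =>
    have h : (1 - T (a * (-e - 1)) : R[T;T⁻¹]) =
        (1 - T (a * -e)) - T (a * (-e - 1)) * (1 - T a) := by
      rw [mul_sub (T _), ← T_add, mul_one]
      ring_nf
    rw [h]
    exact dvd_sub ih (dvd_mul_left _ _)

end LaurentPolynomial

namespace Polynomial

theorem prime_toLaurent {R : Type*} [CommRing R] {p : R[X]} (hp : Prime p) (hpX : ¬ p ∣ X) :
    Prime (toLaurent p) := by
  have hspan : (Ideal.span {p}).IsPrime := Ideal.isPrime_span_singleton_of_prime hp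
  have hdisj : Disjoint (Submonoid.powers (X : R[X]) : Set R[X]) (Ideal.span {p}) := by
    rwa [Ideal.disjoint_powers_iff_notMem_of_isPrime, Ideal.mem_span_singleton]
  have hmap := IsLocalization.isPrime_of_isPrime_disjoint _ R[T;T⁻¹] _ hspan hdisj
  rw [Ideal.map_span, Set.image_singleton, algebraMap_eq_toLaurent] at hmap
  exact (Ideal.span_singleton_prime (toLaurent_ne_zero.mpr hp.ne_zero)).mp hmap

theorem cyclotomic_not_dvd_X {n : ℕ} (hn : 0 < n) : ¬ cyclotomic n ℤ ∣ X := by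
  intro h
  have h1 : cyclotomic n ℤ ∣ X ^ n - (X ^ n - 1) :=
    dvd_sub (h.trans (dvd_pow_self X hn.ne')) (cyclotomic.dvd_X_pow_sub_one n ℤ)
  rw [sub_sub_cancel] at h1
  exact (cyclotomic.irreducible hn).not_isUnit (isUnit_of_dvd_one h1)

end Polynomial

theorem lPhi_prime {n : ℕ} (hn : 0 < n) : Prime (lPhi n) :=
  prime_toLaurent (cyclotomic.irreducible hn).prime (cyclotomic_not_dvd_X hn)

theorem lPhi_dvd_one_sub_T_iff {n : ℕ} (hn : 0 < n) (a : ℤ) :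
    lPhi n ∣ 1 - T a ↔ (n : ℤ) ∣ a := by
  have hζ : IsPrimitiveRoot (Complex.exp (2 * Real.pi * Complex.I / n)) n :=
    Complex.isPrimitiveRoot_exp n hn.ne'
  set ζ : ℂˣ := (hζ.isUnit hn.ne').unit
  set ev : L →+* ℂ := eval₂ (Int.castRingHom ℂ) ζ
  constructor
  · rintro ⟨c, hc⟩
    have hΦζ : ev (lPhi n) = 0 := by
      rw [lPhi, eval₂_toLaurent, ← Polynomial.eval_map, map_cyclotomic]
      exact hζ.isRoot_cyclotomic hn
    have hζa := congrArg ev hc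
    rw [map_mul, hΦζ, zero_mul, map_sub, map_one, eval₂_T, sub_eq_zero, eq_comm,
      Units.val_eq_one] at hζa
    exact ((IsPrimitiveRoot.coe_units_iff.mp hζ).zpow_eq_one_iff_dvd a).mp hζa
  · rintro ⟨e, rfl⟩
    have hΦ : lPhi n ∣ 1 - T n := by
      have := map_dvd toLaurent (cyclotomic.dvd_X_pow_sub_one n ℤ)
      rwa [map_sub, toLaurent_X_pow, map_one, ← neg_sub, dvd_neg] at this
    exact hΦ.trans (one_sub_T_dvd_one_sub_T_mul _ _)

theorem stmt6_general (n d : ℕ) (hn : 0 < n) (hnd : Nat.gcd n d = 1)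
    (r : ℤ) (m : ℕ)
    (hmr : (d * m : ℤ) ≡ -r [ZMOD (n : ℤ)])
    (k : ℕ) (hk1 : m < k) (hk2 : k ≤ n - 1) :
    lPhi n ∣ lpoch r d k ∧
      (∀ p : L, Prime p → p ∣ lPhi n → ¬ p ∣ lpoch d d k) := by
  constructor
  · have hm : (n : ℤ) ∣ r + d * m := by
      simpa [sub_neg_eq_add, add_comm] using hmr.symm.dvd
    exact ((lPhi_dvd_one_sub_T_iff hn _).mpr hm).trans
      (Finset.dvd_prod_of_mem _ (Finset.mem_range.mpr hk1))
  · intro p hp hpΦ hpoch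
    obtain ⟨i, hi, hpi⟩ := hp.exists_mem_finset_dvd hpoch
    have hΦi : lPhi n ∣ 1 - T (d + d * i) :=
      (hp.associated_of_dvd (lPhi_prime hn) hpΦ).symm.dvd.trans hpi
    have hdi : n ∣ d * (i + 1) := by
      rw [← Int.natCast_dvd_natCast]
      push_cast
      rw [mul_add, mul_one, add_comm]
      exact (lPhi_dvd_one_sub_T_iff hn _).mp hΦi
    have := Nat.le_of_dvd i.succ_pos (Nat.Coprime.dvd_of_dvd_mul_left hnd hdi)
    have := Finset.mem_range.mp hi
    omega

theorem stmt6 (n d : ℕ) (hn : 0 < n) (hd : 0 < d) (hnd : Nat.gcd n d = 1)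
    (r : ℤ) (hr : r ≠ 0) (m : ℕ) (hm : m ≤ n - 1)
    (hmr : (d * m : ℤ) ≡ -r [ZMOD (n : ℤ)])
    (k : ℕ) (hk1 : m < k) (hk2 : k ≤ n - 1) :
    lPhi n ∣ lpoch r d k ∧
      (∀ p : L, Prime p → p ∣ lPhi n → ¬ p ∣ lpoch d d k) :=
  stmt6_general n d hn hnd r m hmr k hk1 hk2

end
end

section
/- Let r = 1 or r = −1 and let n > 1, d ≥ 3 be integers with n ≡ −r (mod d). Define f(x) to be the least nonnegative integer k such that (q^x; q^d)_k is divisible by Φ_n(q). Then f(d−r) = (n+r)/d, f(r) = (d(n+1)−(n+r))/d, f(d) = n, f(2r) = (d(n+1)−2(n+r))/d, and the inequalities f(d) ≥ f(r) > (dn−n−r)/d ≥ f(2r) ≥ f(d−r) hold. -/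
/-!
A factor `1 - q^m` is divisible by `Φ_n` exactly when `n ∣ m` (evaluate at a primitive `n`-th
root of unity), so `f x - 1` is the least `i ≥ 0` with `n ∣ x + d i`. Writing `n + r = d s`,
`n` and `d` are coprime, so there is exactly one such `i` below `n`; it is `s - 1`, `n - 1`,
`n - s`, `n - 2s` for `x = d - r, d, r, 2r`, and `d ≥ 3` gives `3 s ≤ n + 1`, which orders them.
-/

noncomputable section

open LaurentPolynomial Polynomial

lemma lPhi_dvd_T_sub_one (n : ℕ) : lPhi n ∣ T n - 1 := by
  simpa [lPhi] using map_dvd toLaurent (cyclotomic.dvd_X_pow_sub_one n ℤ)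

lemma lPhi_dvd_one_sub_T {n : ℕ} {m : ℤ} (h : (n : ℤ) ∣ m) : lPhi n ∣ 1 - T m := by
  obtain ⟨t, rfl⟩ := h
  have hpow (k : ℕ) : lPhi n ∣ 1 - T (n * k) := by
    rw [← dvd_neg, neg_sub, mul_comm, ← T_pow]
    exact (lPhi_dvd_T_sub_one n).trans (sub_one_dvd_pow_sub_one _ k)
  obtain ⟨k, rfl | rfl⟩ := Int.eq_nat_or_neg t
  · exact hpow k
  · have h : (1 - T (n * -k) : L) = -T (n * -k) * (1 - T (n * k)) := by
      rw [neg_mul, mul_sub, mul_one, ← T_add, show (n : ℤ) * -k + n * k = 0 by ring, T_zero]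
      ring
    exact h ▸ (hpow k).mul_left _

lemma lPhi_dvd_lpoch_iff {n : ℕ} (hn : 0 < n) (x d : ℤ) (k : ℕ) :
    lPhi n ∣ lpoch x d k ↔ ∃ i < k, (n : ℤ) ∣ x + d * i := by
  refine ⟨fun hdvd => ?_, fun ⟨i, hik, hi⟩ => (lPhi_dvd_one_sub_T hi).trans
    (Finset.dvd_prod_of_mem _ (Finset.mem_range.mpr hik))⟩
  obtain ⟨ζ, hζ⟩ : ∃ ζ : ℂˣ, IsPrimitiveRoot (ζ : ℂ) n :=
    have h := Complex.isPrimitiveRoot_exp n hn.ne'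
    ⟨(h.isUnit hn.ne').unit, h⟩
  have hroot : LaurentPolynomial.eval₂ (Int.castRingHom ℂ) ζ (lPhi n) = 0 := by
    rw [lPhi, eval₂_toLaurent, eval₂_eq_eval_map, map_cyclotomic]
    exact hζ.isRoot_cyclotomic hn
  have hprod := _root_.map_dvd (LaurentPolynomial.eval₂ (Int.castRingHom ℂ) ζ) hdvd
  rw [hroot, zero_dvd_iff, lpoch, map_prod] at hprod
  obtain ⟨i, hi, hzero⟩ := Finset.prod_eq_zero_iff.mp hprod
  rw [map_sub, map_one, eval₂_T, Units.val_zpow_eq_zpow_val, sub_eq_zero, eq_comm,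
    hζ.zpow_eq_one_iff_dvd] at hzero
  exact ⟨i, Finset.mem_range.mp hi, hzero⟩

lemma eq_of_isCoprime_of_dvd_add_mul {n d x i j : ℤ} (hnd : IsCoprime n d)
    (hi : n ∣ x + d * i) (hj : n ∣ x + d * j) (hi0 : 0 ≤ i) (hin : i < n)
    (hj0 : 0 ≤ j) (hjn : j < n) : i = j := by
  have h : n ∣ d * (i - j) := by simpa [mul_sub] using dvd_sub hi hj
  have := Int.eq_zero_of_abs_lt_dvd (hnd.dvd_of_dvd_mul_left h) (by rw [abs_lt]; omega)
  omega

lemma eq_add_one_of_minimal_lPhi_dvd_lpoch {n d : ℕ} {x : ℤ} {k : ℕ} (hn : 0 < n)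
    (hnd : IsCoprime (n : ℤ) d)
    (hk : lPhi n ∣ lpoch x d k ∧ ∀ k' < k, ¬ lPhi n ∣ lpoch x d k')
    {i : ℤ} (hi0 : 0 ≤ i) (hin : i < n) (hi : (n : ℤ) ∣ x + d * i) : (k : ℤ) = i + 1 := by
  lift i to ℕ using hi0
  have hle : k ≤ i + 1 := not_lt.mp fun h =>
    hk.2 (i + 1) h ((lPhi_dvd_lpoch_iff hn x d _).mpr ⟨i, i.lt_succ_self, hi⟩)
  obtain ⟨j, hjk, hj⟩ := (lPhi_dvd_lpoch_iff hn x d k).mp hk.1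
  have := eq_of_isCoprime_of_dvd_add_mul hnd hi hj (by positivity) hin (by positivity) (by omega)
  omega

theorem stmt9 (r : ℤ) (hr : r = 1 ∨ r = -1) (n d : ℕ) (hn : 1 < n) (hd : 3 ≤ d)
    (hmod : (n : ℤ) ≡ -r [ZMOD (d : ℤ)])
    (f : ℤ → ℕ)
    (hf : ∀ x : ℤ, lPhi n ∣ lpoch x d (f x) ∧ ∀ k < f x, ¬ lPhi n ∣ lpoch x d k) :
    (f ((d : ℤ) - r) : ℤ) = ((n : ℤ) + r) / d ∧
    (f r : ℤ) = ((d : ℤ) * (n + 1) - (n + r)) / d ∧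
    f (d : ℤ) = n ∧
    (f (2 * r) : ℤ) = ((d : ℤ) * (n + 1) - 2 * (n + r)) / d ∧
    f r ≤ f (d : ℤ) ∧
    ((d : ℤ) * n - n - r) / d < (f r : ℤ) ∧
    (f (2 * r) : ℤ) ≤ ((d : ℤ) * n - n - r) / d ∧
    f ((d : ℤ) - r) ≤ f (2 * r) := by
  have hr2 : r * r = 1 := by rcases hr with rfl | rfl <;> norm_num
  obtain ⟨s, hs⟩ : (d : ℤ) ∣ n + r := by simpa using hmod.symm.dvd
  have hnd : IsCoprime (n : ℤ) d := ⟨-r, r * s, by linear_combination (-r) * hs + hr2⟩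
  have hr1 : -1 ≤ r ∧ r ≤ 1 := by omega
  have hs1 : 1 ≤ s := by nlinarith
  have h3s : 3 * s ≤ n + 1 := by nlinarith
  have hf_eq (x i : ℤ) (hi0 : 0 ≤ i) (hin : i < n) (hi : (n : ℤ) ∣ x + d * i) :=
    eq_add_one_of_minimal_lPhi_dvd_lpoch (by omega) hnd (hf x) hi0 hin hi
  have hA := hf_eq (d - r) (s - 1) (by omega) (by omega) ⟨1, by linear_combination -hs⟩
  have hB := hf_eq d (n - 1) (by omega) (by omega) ⟨d, by ring⟩
  have hC := hf_eq r (n - s) (by omega) (by omega) ⟨d - 1, by linear_combination hs⟩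
  have hD := hf_eq (2 * r) (n - 2 * s) (by omega) (by omega) ⟨d - 2, by linear_combination 2 * hs⟩
  have hd0 : (d : ℤ) ≠ 0 := by omega
  rw [Int.ediv_eq_of_eq_mul_right hd0 hs,
    Int.ediv_eq_of_eq_mul_right (c := n + 1 - s) hd0 (by linear_combination -hs),
    Int.ediv_eq_of_eq_mul_right (c := n + 1 - 2 * s) hd0 (by linear_combination -2 * hs),
    Int.ediv_eq_of_eq_mul_right (c := n - s) hd0 (by linear_combination -hs)]
  omega

end
end
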